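/- (The Goldston–Yıldırım majorant dominates the modified von Mangoldt function.) With the definitions in the context: ν(n) ≥ 0 for all n ∈ {0,…,N−1}; and there exists N₀, depending only on k and w, such that for every prime N ≥ N₀ and every integer n with ε_k N ≤ n ≤ 2 ε_k N, one has ν(n) ≥ (1/(k·2^{k+5}))·Λ̃(n). -/
import Mathlib


open Finset

/-- `W`, the product of the primes up to `w`. -/
def Wprod (w : ℕ) : ℕ := ∏ p ∈ Nat.primesBelow (w + 1), p

/-- The Goldston–Yıldırım truncated divisor sum `Λ_R(n)`. -/
noncomputable def LambdaR (R : ℝ) (n : ℕ) : ℝ :=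
  ∑ d ∈ n.divisors.filter (fun d : ℕ => (d : ℝ) ≤ R),
    (ArithmeticFunction.moebius d : ℝ) * Real.log (R / d)

/-- The modified von Mangoldt function `Λ̃`. -/
noncomputable def LambdaTilde (w : ℕ) (n : ℕ) : ℝ :=
  if Nat.Prime (Wprod w * n + 1) then
    (Nat.totient (Wprod w) : ℝ) / (Wprod w : ℝ) * Real.log (Wprod w * n + 1)
  else 0

/-- `ε_k = 1/(2^k (k+4)!)`. -/
noncomputable def epsk (k : ℕ) : ℝ := 1 / (2 ^ k * (k + 4).factorial)

/-- `R = N^{1/(k 2^{k+4})}`. -/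
noncomputable def Rpar (k N : ℕ) : ℝ := (N : ℝ) ^ ((1 : ℝ) / (k * 2 ^ (k + 4)))

/-- The Goldston–Yıldırım majorant `ν` on `{0, …, N-1}`. -/
noncomputable def GYnu (k w N : ℕ) (n : ℕ) : ℝ :=
  if epsk k * N ≤ (n : ℝ) ∧ (n : ℝ) ≤ 2 * epsk k * N then
    (Nat.totient (Wprod w) : ℝ) / (Wprod w : ℝ) *
      (LambdaR (Rpar k N) (Wprod w * n + 1)) ^ 2 / Real.log (Rpar k N)
  else 1

lemma lambdaR_of_prime {R : ℝ} {p : ℕ} (hp : p.Prime) (h1 : 1 ≤ R) (h2 : R < p) :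
    LambdaR R p = Real.log R := by
  unfold LambdaR
  have hfil : p.divisors.filter (fun d : ℕ => (d : ℝ) ≤ R) = {1} := by
    rw [hp.divisors, Finset.filter_insert, if_pos (by exact_mod_cast h1),
      Finset.filter_singleton, if_neg (not_le.2 h2)]
    rfl
  rw [hfil]
  simp

lemma two_le_Wprod (w : ℕ) (hw : 2 ≤ w) : 2 ≤ Wprod w := by
  have h2 : 2 ∈ Nat.primesBelow (w + 1) := by
    rw [Nat.mem_primesBelow]
    exact ⟨by omega, Nat.prime_two⟩
  have hdvd : 2 ∣ Wprod w := Finset.dvd_prod_of_mem _ h2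
  have hpos : 0 < Wprod w := Finset.prod_pos fun p hp =>
    (Nat.prime_of_mem_primesBelow hp).pos
  exact Nat.le_of_dvd hpos hdvd

/-- The majorant `ν` is nonnegative, and for `N` large (depending only on `k` and
`w`) it dominates `k⁻¹ 2^{-k-5} Λ̃` on `[ε_k N, 2 ε_k N]`. -/
theorem GYnu_majorises (k w : ℕ) (hk : 1 ≤ k) (hw : 2 ≤ w) :
    (∀ N : ℕ, Nat.Prime N → ∀ n : ℕ, n < N → 0 ≤ GYnu k w N n) ∧
    ∃ N₀ : ℕ, ∀ N : ℕ, N₀ ≤ N → Nat.Prime N →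
      ∀ n : ℕ, epsk k * N ≤ (n : ℝ) → (n : ℝ) ≤ 2 * epsk k * N →
        1 / (k * 2 ^ (k + 5) : ℝ) * LambdaTilde w n ≤ GYnu k w N n := by
  have hkR : (1 : ℝ) ≤ k := by exact_mod_cast hk
  have hW2 : 2 ≤ Wprod w := two_le_Wprod w hw
  have hWR : (2 : ℝ) ≤ (Wprod w : ℝ) := by exact_mod_cast hW2
  have hcnn : (0 : ℝ) ≤ (Nat.totient (Wprod w) : ℝ) / (Wprod w : ℝ) := by positivity
  -- basic facts about ε_k
  have hεpos : 0 < epsk k := by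
    unfold epsk; positivity
  have hεle : 2 * epsk k ≤ 1 := by
    unfold epsk
    rw [mul_one_div, div_le_one (by positivity)]
    have h1 : (2:ℝ) ≤ 2 ^ k := by
      calc (2:ℝ) = 2^1 := (pow_one 2).symm
      _ ≤ 2^k := pow_le_pow_right₀ (by norm_num) hk
    have h2 : (1:ℝ) ≤ ((k+4).factorial : ℝ) := by
      exact_mod_cast Nat.one_le_iff_ne_zero.2 (Nat.factorial_ne_zero _)
    nlinarith
  -- facts about the exponent
  have hepos : 0 < (1 : ℝ) / (k * 2 ^ (k + 4)) := by positivity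
  have hehalf : (1 : ℝ) / (k * 2 ^ (k + 4)) ≤ 1 / 2 := by
    apply one_div_le_one_div_of_le (by norm_num)
    have : (2:ℝ) ≤ 2 ^ (k+4) := by
      calc (2:ℝ) = 2^1 := (pow_one 2).symm
      _ ≤ 2^(k+4) := pow_le_pow_right₀ (by norm_num) (by omega)
    nlinarith
  -- nonnegativity of log R for prime N
  have hR1 : ∀ N : ℕ, Nat.Prime N → 1 ≤ Rpar k N := by
    intro N hN
    exact Real.one_le_rpow (by exact_mod_cast hN.two_le.trans' (by norm_num)) hepos.le
  constructor
  · intro N hN n _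
    unfold GYnu
    split
    · apply div_nonneg (mul_nonneg hcnn (sq_nonneg _))
      exact Real.log_nonneg (hR1 N hN)
    · norm_num
  · refine ⟨Wprod w + 1 + ⌈(epsk k)⁻¹ ^ 2⌉₊, fun N hN hNp n hn1 hn2 => ?_⟩
    have hN2 : 2 ≤ N := hNp.two_le
    have hNR1 : (1:ℝ) ≤ N := by exact_mod_cast hN2.trans' (by norm_num)
    have hNpos : (0:ℝ) < N := by linarith
    have hlogR : Real.log (Rpar k N) = 1 / (k * 2 ^ (k + 4)) * Real.log N := by
      unfold Rpar; exact Real.log_rpow hNpos _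
    have hNR1' : (1:ℝ) < N := by
      have : (2:ℝ) ≤ N := by exact_mod_cast hN2
      linarith
    have hRgt1 : 1 < Rpar k N := by
      unfold Rpar
      rw [Real.one_lt_rpow_iff_of_pos hNpos]
      exact Or.inl ⟨hNR1', hepos⟩
    have hlogRpos : 0 < Real.log (Rpar k N) := Real.log_pos hRgt1
    -- R ≤ √N ≤ ε_k N
    have hRsqrt : Rpar k N ≤ Real.sqrt N := by
      rw [Real.sqrt_eq_rpow]
      exact Real.rpow_le_rpow_of_exponent_le hNR1 hehalf
    have hNbig : (epsk k)⁻¹ ^ 2 ≤ (N : ℝ) := by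
      calc (epsk k)⁻¹ ^ 2 ≤ (⌈(epsk k)⁻¹ ^ 2⌉₊ : ℝ) := Nat.le_ceil _
      _ ≤ N := by exact_mod_cast le_trans (by omega) hN
    have hsqrtεN : Real.sqrt N ≤ epsk k * N := by
      have hs : (epsk k)⁻¹ ≤ Real.sqrt N := (Real.le_sqrt (by positivity) hNpos.le).2 hNbig
      have hss : Real.sqrt N * Real.sqrt N = N := Real.mul_self_sqrt hNpos.le
      have hsnn : 0 ≤ Real.sqrt N := Real.sqrt_nonneg _
      nlinarith [mul_inv_cancel₀ hεpos.ne']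
    -- main case split
    unfold LambdaTilde GYnu
    rw [if_pos (⟨hn1, hn2⟩ : epsk k * (N:ℝ) ≤ n ∧ (n : ℝ) ≤ 2 * epsk k * N)]
    by_cases hp : Nat.Prime (Wprod w * n + 1)
    case neg =>
      rw [if_neg hp]
      apply le_trans (le_of_eq (mul_zero _))
      apply div_nonneg (mul_nonneg hcnn (sq_nonneg _)) hlogRpos.le
    case pos =>
      rw [if_pos hp]
      set p := Wprod w * n + 1 with hpdef
      have hpn : (n:ℝ) + 1 ≤ (p:ℝ) := by
        have : n + 1 ≤ p := by
          have : 1 * n ≤ Wprod w * n := Nat.mul_le_mul_right n (by omega)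
          omega
        exact_mod_cast this
      have hRp : Rpar k N < (p:ℝ) := by
        calc Rpar k N ≤ Real.sqrt N := hRsqrt
        _ ≤ epsk k * N := hsqrtεN
        _ ≤ (n:ℝ) := hn1
        _ < (p:ℝ) := by linarith
      rw [show ((Wprod w : ℝ) * (n:ℝ) + 1) = ((p:ℕ):ℝ) by push_cast [hpdef]; ring]
      rw [lambdaR_of_prime hp (hR1 N hNp) hRp]
      rw [sq, mul_div_assoc, mul_div_assoc, div_self hlogRpos.ne', mul_one]
      -- now: 1/(k 2^(k+5)) * (c * log p) ≤ c * log R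
      have hpN2 : p ≤ N^2 := by
        have hnN : n ≤ N := by
          have : (n:ℝ) ≤ N := le_trans hn2 (by nlinarith)
          exact_mod_cast this
        have hWN : Wprod w + 1 ≤ N := le_trans (by omega) hN
        calc p = Wprod w * n + 1 := rfl
        _ ≤ Wprod w * N + N := by
          have := Nat.mul_le_mul_left (Wprod w) hnN
          omega
        _ = (Wprod w + 1) * N := by ring
        _ ≤ N * N := Nat.mul_le_mul_right N hWN
        _ = N^2 := (sq N).symm
      have hlogp : Real.log p ≤ 2 * Real.log N := by
        calc Real.log p ≤ Real.log (N^2 : ℕ) := by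
              apply Real.log_le_log (by positivity)
              exact_mod_cast hpN2
        _ = 2 * Real.log N := by
              push_cast
              rw [Real.log_pow]
              norm_num
      have hlogpnn : 0 ≤ Real.log (p:ℝ) := Real.log_nonneg (by exact_mod_cast hp.one_lt.le)
      rw [hlogR]
      have hkey : 1 / ((k:ℝ) * 2 ^ (k + 5)) * 2 = 1 / (k * 2 ^ (k + 4)) := by
        have hkne : (k:ℝ) ≠ 0 := by positivity
        have h2ne : (2:ℝ)^(k+4) ≠ 0 := by positivity
        field_simp
        ring
      have hlogNnn : 0 ≤ Real.log N := Real.log_nonneg hNR1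
      have hcoef : (0:ℝ) ≤ 1 / ((k:ℝ) * 2 ^ (k + 5)) := by positivity
      calc 1 / ((k:ℝ) * 2 ^ (k + 5)) * ((Nat.totient (Wprod w) : ℝ) / (Wprod w : ℝ) * Real.log p)
          ≤ 1 / ((k:ℝ) * 2 ^ (k + 5)) * ((Nat.totient (Wprod w) : ℝ) / (Wprod w : ℝ) * (2 * Real.log N)) := by
            apply mul_le_mul_of_nonneg_left (mul_le_mul_of_nonneg_left hlogp hcnn) hcoef
        _ = (Nat.totient (Wprod w) : ℝ) / (Wprod w : ℝ) * (1 / ((k:ℝ) * 2 ^ (k + 5)) * 2 * Real.log N) := by ring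
        _ = (Nat.totient (Wprod w) : ℝ) / (Wprod w : ℝ) * (1 / (k * 2 ^ (k + 4)) * Real.log N) := by rw [hkey]
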